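/- arXiv:2003.03873 — 2 statements merged into one kernel-verified Lean document; each statement's English description precedes it below -/
import Mathlib

section
/- The join of the cycle C_{n-2} with the edgeless graph on 2 vertices has diameter 2 for all n ≥ 5, and its Wiener index equals n^2 - 4n + 6. -/
/-!
In a graph of diameter at most `2` every ordered pair of distinct vertices is at distance `1`
or `2` according as it is an edge or not, so each vertex `u` contributes
`∑ v, dist u v = 2 (N - 1) - deg u`, and the distance sum is `2N² - 2N - ∑ deg`.
Joining `C_m` with two independent vertices gives a graph of diameter exactly `2`
(the two added vertices are non-adjacent with a common neighbour) and degree sum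
`4m + 2m`, whence `W = (m + 2)² - (m + 2) - 3m = n² - 4n + 6` for `n = m + 2`.
-/

open SimpleGraph Finset

/-- The Wiener index of a graph. -/
noncomputable def wienerIndex {V : Type*} [Fintype V] (G : SimpleGraph V) : ℕ :=
  (∑ u : V, ∑ v : V, G.dist u v) / 2

/-- The join of two graphs: disjoint union of the vertex sets, keeping all edges of both
graphs and adding all edges between the two vertex sets. -/
def graphJoin {α β : Type*} (G : SimpleGraph α) (H : SimpleGraph β) :
    SimpleGraph (α ⊕ β) where
  Adj x y :=
    match x, y with
    | Sum.inl a, Sum.inl b => G.Adj a b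
    | Sum.inr a, Sum.inr b => H.Adj a b
    | Sum.inl _, Sum.inr _ => True
    | Sum.inr _, Sum.inl _ => True
  symm := by
    exact ⟨by rintro (a | a) (b | b) h <;> simp_all [SimpleGraph.adj_comm]⟩
  loopless := by
    exact ⟨by rintro (a | a) h <;> simp_all⟩

namespace SimpleGraph

variable {V : Type*} {G : SimpleGraph V} [DecidableEq V] [DecidableRel G.Adj]

lemma dist_eq_of_ediam_le_two (h : G.ediam ≤ 2) (u v : V) :
    G.dist u v = if u = v then 0 else if G.Adj u v then 1 else 2 := by
  split_ifs with huv hadj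
  · simp [huv]
  · exact dist_eq_one_iff_adj.mpr hadj
  · have hgt : 1 < G.edist u v := lt_of_not_ge (by simp [edist_le_one_iff_adj_or_eq, hadj, huv])
    have htwo : G.edist u v = 2 :=
      le_antisymm (edist_le_ediam.trans h) (Order.add_one_le_of_lt hgt)
    simp [dist, htwo]

variable [Fintype V]

lemma sum_dist_add_degree_of_ediam_le_two (h : G.ediam ≤ 2) (u : V) :
    ∑ v, G.dist u v + G.degree u + 2 = 2 * Fintype.card V := by
  have hpair : ∀ v, G.dist u v + (if G.Adj u v then 1 else 0) + (if u = v then 2 else 0) = 2 := by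
    intro v
    rw [dist_eq_of_ediam_le_two h]
    by_cases huv : u = v
    · simp [huv]
    · split_ifs <;> simp
  calc ∑ v, G.dist u v + G.degree u + 2
      = ∑ v, (G.dist u v + (if G.Adj u v then 1 else 0) + (if u = v then 2 else 0)) := by
        rw [sum_add_distrib, sum_add_distrib, sum_ite_eq, sum_boole, ← card_neighborFinset_eq_degree,
          neighborFinset_eq_filter]
        simp
    _ = 2 * Fintype.card V := by simp [hpair, mul_comm]

lemma sum_sum_dist_add_sum_degree_of_ediam_le_two (h : G.ediam ≤ 2) :
    ∑ u, ∑ v, G.dist u v + ∑ u, G.degree u + 2 * Fintype.card V = 2 * Fintype.card V ^ 2 := by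
  calc ∑ u, ∑ v, G.dist u v + ∑ u, G.degree u + 2 * Fintype.card V
      = ∑ u : V, (∑ v, G.dist u v + G.degree u + 2) := by
        simp [sum_add_distrib, mul_comm]
    _ = 2 * Fintype.card V ^ 2 := by
        simp [sum_dist_add_degree_of_ediam_le_two h, sq, mul_left_comm]

end SimpleGraph

section graphJoin

variable {α β : Type*} {G : SimpleGraph α} {H : SimpleGraph β}

instance [DecidableRel G.Adj] [DecidableRel H.Adj] : DecidableRel (graphJoin G H).Adj
  | Sum.inl a, Sum.inl b => inferInstanceAs (Decidable (G.Adj a b))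
  | Sum.inr a, Sum.inr b => inferInstanceAs (Decidable (H.Adj a b))
  | Sum.inl _, Sum.inr _ => isTrue trivial
  | Sum.inr _, Sum.inl _ => isTrue trivial

lemma ediam_graphJoin_le_two [Nonempty α] [Nonempty β] : (graphJoin G H).ediam ≤ 2 := by
  have hpath : ∀ {x y w : α ⊕ β}, (graphJoin G H).Adj x w → (graphJoin G H).Adj w y →
      (graphJoin G H).edist x y ≤ 2 := fun hxw hwy => by
    simpa using (Walk.cons hxw (Walk.cons hwy .nil)).edist_le
  refine ediam_le_of_edist_le ?_
  rintro (a | a) (b | b)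
  · exact hpath (w := .inr (Classical.arbitrary β)) trivial trivial
  · exact (edist_eq_one_iff_adj.mpr trivial).trans_le one_le_two
  · exact (edist_eq_one_iff_adj.mpr trivial).trans_le one_le_two
  · exact hpath (w := .inl (Classical.arbitrary α)) trivial trivial

lemma ediam_graphJoin_eq_two [Nonempty α] {x y : β} (hxy : x ≠ y) (hadj : ¬ H.Adj x y) :
    (graphJoin G H).ediam = 2 := by
  have : Nonempty β := ⟨x⟩
  refine le_antisymm ediam_graphJoin_le_two ?_
  have hcommon : ((graphJoin G H).commonNeighbors (.inr x) (.inr y)).Nonempty :=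
    ⟨.inl (Classical.arbitrary α), ⟨trivial, trivial⟩⟩
  calc (2 : ℕ∞) = (graphJoin G H).edist (.inr x) (.inr y) :=
        (edist_eq_two_iff.mpr ⟨Sum.inr_injective.ne hxy, hadj, hcommon⟩).symm
    _ ≤ _ := edist_le_ediam

variable [Fintype α] [Fintype β] [DecidableRel G.Adj] [DecidableRel H.Adj]

lemma degree_graphJoin_inl (a : α) :
    (graphJoin G H).degree (.inl a) = G.degree a + Fintype.card β := by
  simp only [← card_neighborFinset_eq_degree, neighborFinset_eq_filter, card_filter,
    Fintype.sum_sum_type]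
  congr 1
  simp [graphJoin]

lemma degree_graphJoin_inr (b : β) :
    (graphJoin G H).degree (.inr b) = H.degree b + Fintype.card α := by
  simp only [← card_neighborFinset_eq_degree, neighborFinset_eq_filter, card_filter,
    Fintype.sum_sum_type]
  rw [add_comm]
  congr 1
  simp [graphJoin]

lemma sum_degree_graphJoin :
    ∑ x, (graphJoin G H).degree x =
      ∑ a, G.degree a + ∑ b, H.degree b + 2 * Fintype.card α * Fintype.card β := by
  simp [Fintype.sum_sum_type, degree_graphJoin_inl, degree_graphJoin_inr, sum_add_distrib]
  ring

end graphJoin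

/-- For `n ≥ 5`, the join of the cycle `C_{n-2}` with the edgeless graph on two vertices
has diameter `2` and Wiener index `n² - 4n + 6`. -/
theorem join_cycle_diam_and_wiener (n : ℕ) (hn : 5 ≤ n) :
    (graphJoin (cycleGraph (n - 2)) (⊥ : SimpleGraph (Fin 2))).diam = 2 ∧
    wienerIndex (graphJoin (cycleGraph (n - 2)) (⊥ : SimpleGraph (Fin 2))) =
      n ^ 2 - 4 * n + 6 := by
  obtain ⟨m, rfl⟩ : ∃ m, n = m + 5 := ⟨n - 5, by omega⟩
  rw [show m + 5 - 2 = m + 3 from rfl]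
  have hediam : (graphJoin (cycleGraph (m + 3)) (⊥ : SimpleGraph (Fin 2))).ediam = 2 :=
    ediam_graphJoin_eq_two (x := 0) (y := 1) (by decide) (by simp)
  refine ⟨by rw [diam, hediam]; rfl, ?_⟩
  have hsum := sum_sum_dist_add_sum_degree_of_ediam_le_two hediam.le
  simp only [sum_degree_graphJoin, cycleGraph_degree_three_le, bot_degree, sum_const, card_univ,
    Fintype.card_sum, Fintype.card_fin, smul_eq_mul] at hsum
  rw [wienerIndex]
  ring_nf at hsum ⊢
  omega
end

section
/- Among all integer sequences x_1 ≥ ... ≥ x_n with n = 2k+1 (k ≥ 8), ∑ x_i = 4(n-2), and 3 ≤ x_i ≤ k-2 for all i, the maximum of ∑ x_i^2 equals 2(k-2)^2 + 36 + 9(2k-2) = 2k^2 + 10k + 26, attained by the sequence (k-2, k-2, 6, 3, 3, ..., 3). -/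
/-!
Let `a ≥ b ≥ c` be the three largest entries. Every later entry `x` lies in `[3, c]`, so
`(x - 3)(c - x) ≥ 0` bounds the sum of squares of the `2k - 1` entries from `c` on by
`(3 + c) T - 3c(2k - 1)`, where `T = 8k - 4 - a - b` is their sum; since the `2k - 2` entries after
`c` are at least `3`, also `c ≤ 2k + 2 - a - b`. What is left is a quadratic inequality in
`a, b, c, k`.
-/

open Finset

theorem sum_sq_le_of_forall_mem_Icc {ι R : Type*} [CommRing R] [LinearOrder R]
    [IsStrictOrderedRing R] (s : Finset ι) (f : ι → R) {a b : R}
    (hf : ∀ i ∈ s, f i ∈ Set.Icc a b) :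
    ∑ i ∈ s, f i ^ 2 ≤ (a + b) * ∑ i ∈ s, f i - #s * (a * b) := by
  have key : ∀ i ∈ s, f i ^ 2 ≤ (a + b) * f i - a * b := fun i hi => by
    obtain ⟨ha, hb⟩ := hf i hi
    nlinarith [mul_nonneg (sub_nonneg.2 ha) (sub_nonneg.2 hb)]
  calc ∑ i ∈ s, f i ^ 2 ≤ ∑ i ∈ s, ((a + b) * f i - a * b) := sum_le_sum key
    _ = _ := by rw [sum_sub_distrib, ← mul_sum, sum_const, nsmul_eq_mul]

/-- The left side increases with `c` (its `c`-coefficient `2k - 1 - a - b` is at least `3`), and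
at `c = 2k + 2 - a - b` it is convex in `(a, b)`: the maximum sits at `a = b = k - 2`, `c = 6`. -/
theorem sum_sq_bound_of_three_largest {a b c k : ℤ} (hk : 8 ≤ k) (hcb : c ≤ b) (hba : b ≤ a)
    (hak : a ≤ k - 2) (habc : a + b + c ≤ 2 * k + 2) :
    a ^ 2 + b ^ 2 + ((3 + c) * (8 * k - 4 - a - b) - (2 * k - 1) * (3 * c))
      ≤ 2 * k ^ 2 + 10 * k + 26 := by
  nlinarith [mul_nonneg (sub_nonneg.2 hak) (by linarith : (0 : ℤ) ≤ k - 2 - b),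
    mul_nonneg (sub_nonneg.2 hak) (sub_nonneg.2 (hcb.trans hba)),
    mul_nonneg (by linarith : (0 : ℤ) ≤ k - 2 - b) (sub_nonneg.2 hcb)]

theorem sum_sq_le_of_antitone {m : ℕ} (k : ℤ) (hk : 8 ≤ k) (hm : (m : ℤ) = 2 * k - 2)
    (x : Fin (m + 3) → ℤ) (hx : Antitone x) (hsum : ∑ i, x i = 8 * k - 4)
    (hlo : ∀ i, 3 ≤ x i) (hhi : x 0 ≤ k - 2) :
    ∑ i, x i ^ 2 ≤ 2 * k ^ 2 + 10 * k + 26 := by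
  simp only [Fin.sum_univ_succ (n := m + 2), Fin.sum_univ_succ (n := m + 1),
    Fin.succ_zero_eq_one] at hsum ⊢
  have htail : ∀ i ∈ (univ : Finset (Fin (m + 1))), x i.succ.succ ∈ Set.Icc 3 (x 2) :=
    fun i _ => ⟨hlo _, hx (Fin.succ_le_succ_iff.2 (Fin.succ_le_succ_iff.2 (Fin.zero_le i)))⟩
  have hsq := sum_sq_le_of_forall_mem_Icc _ _ htail
  have hc_le : x 2 + m * 3 ≤ ∑ i : Fin (m + 1), x i.succ.succ := by
    rw [Fin.sum_univ_succ]
    simpa using card_nsmul_le_sum univ (fun i : Fin m => x i.succ.succ.succ) 3 (fun i _ => hlo _)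
  have hT : ∑ i : Fin (m + 1), x i.succ.succ = 8 * k - 4 - x 0 - x 1 := by linarith
  rw [hT, card_univ, Fintype.card_fin, Nat.cast_succ, hm] at hsq
  rw [hT, hm] at hc_le
  have hcb : x 2 ≤ x 1 := hx (Fin.le_def.2 one_le_two)
  have hba : x 1 ≤ x 0 := hx (Fin.zero_le _)
  linarith [sum_sq_bound_of_three_largest hk hcb hba hhi (by linarith)]

theorem sum_fin_ite_lt_two_ite_eq_two {M : Type*} [AddCommMonoid M] (m : ℕ) (p q r : M) :
    ∑ i : Fin (m + 3), (if (i : ℕ) < 2 then p else if (i : ℕ) = 2 then q else r)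
      = p + p + q + m • r := by
  simp [Fin.sum_univ_succ, add_assoc]

/-- Among all nonincreasing integer sequences `x₁ ≥ … ≥ xₙ` with `n = 2k + 1` (`k ≥ 8`),
sum `4(n - 2)`, and `3 ≤ xᵢ ≤ k - 2` for all `i`, the maximum of `∑ xᵢ²` equals
`2(k-2)² + 36 + 9(2k-2) = 2k² + 10k + 26`, attained by `(k-2, k-2, 6, 3, …, 3)`. -/
theorem max_sum_sq_odd_quadrangulation_degrees (k : ℕ) (hk : 8 ≤ k) (n : ℕ)
    (hn : n = 2 * k + 1) :
    let y : Fin n → ℤ := fun i =>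
      if (i : ℕ) < 2 then (k : ℤ) - 2 else if (i : ℕ) = 2 then 6 else 3
    ((∀ i j : Fin n, i ≤ j → y j ≤ y i) ∧ (∑ i, y i = 4 * ((n : ℤ) - 2)) ∧
      (∀ i, 3 ≤ y i ∧ y i ≤ (k : ℤ) - 2) ∧
      (∑ i, (y i) ^ 2 = 2 * ((k : ℤ) - 2) ^ 2 + 36 + 9 * (2 * (k : ℤ) - 2)) ∧
      (∑ i, (y i) ^ 2 = 2 * (k : ℤ) ^ 2 + 10 * (k : ℤ) + 26)) ∧
    ∀ x : Fin n → ℤ, (∀ i j : Fin n, i ≤ j → x j ≤ x i) →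
      (∑ i, x i = 4 * ((n : ℤ) - 2)) → (∀ i, 3 ≤ x i ∧ x i ≤ (k : ℤ) - 2) →
      ∑ i, (x i) ^ 2 ≤ 2 * (k : ℤ) ^ 2 + 10 * (k : ℤ) + 26 := by
  intro y
  obtain ⟨m, rfl⟩ : ∃ m, n = m + 3 := ⟨n - 3, by omega⟩
  have hm : (m : ℤ) = 2 * k - 2 := by omega
  have hy_sq : ∑ i, y i ^ 2 = 2 * ((k : ℤ) - 2) ^ 2 + 36 + 9 * (2 * (k : ℤ) - 2) := by
    simp only [y, ite_pow]
    rw [sum_fin_ite_lt_two_ite_eq_two, nsmul_eq_mul, hm]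
    ring
  refine ⟨⟨fun i j hij => ?_, ?_, fun i => ?_, hy_sq, by rw [hy_sq]; ring⟩,
    fun x hx hsum hbd => ?_⟩
  · rw [Fin.le_def] at hij
    simp only [y]
    split_ifs <;> omega
  · rw [sum_fin_ite_lt_two_ite_eq_two, nsmul_eq_mul, hm]
    push_cast
    linarith
  · simp only [y]
    split_ifs <;> omega
  · refine sum_sq_le_of_antitone k (by omega) hm x hx ?_ (fun i => (hbd i).1) (hbd 0).2
    push_cast at hsum
    linarith
end
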